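/- Let G be a group, H ≤ G a subgroup of finite index, and π_n : H → U(k(n)) a sequence of maps that is an approximate homomorphism (‖π_n(h₁h₂) − π_n(h₁)π_n(h₂)‖ → 0 for all h₁, h₂ ∈ H). Then the induced maps Ind π_n : G → U(N·k(n)) (defined via coset representatives g_1,...,g_N as for induced representations) form an approximate homomorphism of G, and ‖(Ind π_n)(gg') − (Ind π_n)(g)(Ind π_n)(g')‖ ≤ max over the relevant elements h', h ∈ H of ‖π_n(h')π_n(h) − π_n(h'h)‖. -/

import Mathlib

open Matrix Filter

/-- The operator norm on `n×n` complex matrices. -/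
noncomputable def opNorm {ι : Type*} [Fintype ι] [DecidableEq ι] (M : Matrix ι ι ℂ) : ℝ :=
  ‖Matrix.toEuclideanCLM (n := ι) (𝕜 := ℂ) M‖

/-- The induced (approximate) representation: given coset data `j, hf` with
`g·gᵢ = g_{j(g,i)}·hf(g,i)`, the operator `(Ind π)(g)` on `⊕ᵢ ℂᵏ` has block entry
`π(hf g i)` in block position `(j g i, i)` and `0` elsewhere. -/
noncomputable def IndRep {G : Type*} [Group G] {H : Subgroup G} (N km : ℕ)
    (π : H → Matrix (Fin km) (Fin km) ℂ)
    (j : G → Fin N → Fin N) (hf : G → Fin N → H) (g : G) :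
    Matrix (Fin N × Fin km) (Fin N × Fin km) ℂ :=
  Matrix.of fun p q => if p.1 = j g q.1 then π (hf g q.1) p.2 q.2 else 0

/-!
`(Ind π)(g)` is a block monomial matrix: its only nonzero blocks are `π(h_g(i))` in block
position `(j_g(i), i)`. Such matrices multiply by composing the index maps and multiplying the
blocks, and the cocycle identities `j_{gg'} = j_g ∘ j_{g'}`,
`h_{gg'}(i) = h_g(j_{g'}(i)) h_{g'}(i)` then exhibit the defect of `Ind π` at `(g, g')` as the
block monomial matrix whose blocks are the defects of `π` at `(h_g(j_{g'}(i)), h_{g'}(i))`.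
With an injective index map the blocks act on orthogonal pieces of the space, so the operator
norm is at most the largest block norm, and that maximum of finitely many null sequences is null.
-/

open scoped Matrix.Norms.L2Operator

theorem opNorm_eq_norm {ι : Type*} [Fintype ι] [DecidableEq ι] (M : Matrix ι ι ℂ) :
    opNorm M = ‖M‖ :=
  rfl

theorem EuclideanSpace.norm_sq_eq_sum_curry {ι κ 𝕜 : Type*} [Fintype ι] [Fintype κ] [RCLike 𝕜]
    (x : EuclideanSpace 𝕜 (ι × κ)) :
    ‖x‖ ^ 2 = ∑ i, ‖(WithLp.toLp 2 fun b => x (i, b) : EuclideanSpace 𝕜 κ)‖ ^ 2 := by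
  simp [EuclideanSpace.norm_sq_eq, Fintype.sum_prod_type]

section BlockMonomial

variable {ι κ α : Type*} [DecidableEq ι]

def blockMonomial [Zero α] (σ : ι → ι) (B : ι → Matrix κ κ α) : Matrix (ι × κ) (ι × κ) α :=
  of fun p q => if p.1 = σ q.1 then B q.1 p.2 q.2 else 0

theorem blockMonomial_sub [SubNegZeroMonoid α] (σ : ι → ι) (A B : ι → Matrix κ κ α) :
    blockMonomial σ A - blockMonomial σ B = blockMonomial σ (A - B) := by
  ext p q
  simp only [blockMonomial, Matrix.sub_apply, of_apply, Pi.sub_apply]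
  split_ifs <;> simp

variable [Fintype ι] [Fintype κ]

theorem blockMonomial_mul [NonUnitalNonAssocSemiring α] (σ τ : ι → ι) (A B : ι → Matrix κ κ α) :
    blockMonomial σ A * blockMonomial τ B = blockMonomial (σ ∘ τ) fun i => A (τ i) * B i := by
  ext p q
  simp [blockMonomial, mul_apply, Fintype.sum_prod_type, ite_mul, mul_ite, Finset.sum_ite_eq']

theorem blockMonomial_mulVec_apply [NonUnitalNonAssocSemiring α] {σ : ι → ι}
    (hσ : σ.Injective) (B : ι → Matrix κ κ α) (v : ι × κ → α) (i : ι) (a : κ) :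
    (blockMonomial σ B *ᵥ v) (σ i, a) = (B i *ᵥ fun b => v (i, b)) a := by
  simp [blockMonomial, mulVec, dotProduct, Fintype.sum_prod_type, hσ.eq_iff, ite_mul]

theorem norm_blockMonomial_le [DecidableEq κ] {σ : ι → ι} (hσ : σ.Injective)
    {B : ι → Matrix κ κ ℂ} {C : ℝ} (hC : 0 ≤ C) (hB : ∀ i, ‖B i‖ ≤ C) :
    ‖blockMonomial σ B‖ ≤ C := by
  set T := toEuclideanCLM (n := ι × κ) (𝕜 := ℂ) (blockMonomial σ B)
  refine T.opNorm_le_bound hC fun x => (sq_le_sq₀ (by positivity) (by positivity)).mp ?_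
  set y : ι → EuclideanSpace ℂ κ := fun i => WithLp.toLp 2 fun b => x (i, b)
  calc ‖T x‖ ^ 2 = ∑ i, ‖toEuclideanCLM (n := κ) (𝕜 := ℂ) (B i) (y i)‖ ^ 2 := by
        rw [EuclideanSpace.norm_sq_eq_sum_curry,
          ← (Equiv.ofBijective σ hσ.bijective_of_finite).sum_comp]
        simp [T, y, EuclideanSpace.norm_sq_eq, blockMonomial_mulVec_apply hσ]
    _ ≤ ∑ i, (C * ‖y i‖) ^ 2 := by
        gcongr with i
        exact (toEuclideanCLM (n := κ) (𝕜 := ℂ) (B i)).le_of_opNorm_le (hB i) _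
    _ = (C * ‖x‖) ^ 2 := by
        simp only [mul_pow, ← Finset.mul_sum, EuclideanSpace.norm_sq_eq_sum_curry x, y]

end BlockMonomial

section CosetRepresentatives

variable {G : Type*} [Group G] {H : Subgroup G} {N : ℕ} {gr : Fin N → G}
  {j : G → Fin N → Fin N} {hf : G → Fin N → H}

theorem coe_mul_cosetRep (hrel : ∀ (g : G) (i : Fin N), g * gr i = gr (j g i) * ((hf g i : G)))
    (g : G) (i : Fin N) : ((g * gr i : G) : G ⧸ H) = gr (j g i) := by
  rw [hrel, QuotientGroup.mk_mul_of_mem _ (hf g i).2]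

theorem cosetIndex_mul (hgr : Function.Injective fun i => (gr i : G ⧸ H))
    (hrel : ∀ (g : G) (i : Fin N), g * gr i = gr (j g i) * ((hf g i : G)))
    (g g' : G) (i : Fin N) : j (g * g') i = j g (j g' i) := hgr <| by
  dsimp only
  rw [← coe_mul_cosetRep hrel, ← coe_mul_cosetRep hrel, mul_assoc, hrel g' i, ← mul_assoc,
    QuotientGroup.mk_mul_of_mem _ (hf g' i).2]

theorem cosetFactor_mul (hgr : Function.Injective fun i => (gr i : G ⧸ H))
    (hrel : ∀ (g : G) (i : Fin N), g * gr i = gr (j g i) * ((hf g i : G)))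
    (g g' : G) (i : Fin N) : hf (g * g') i = hf g (j g' i) * hf g' i := by
  refine Subtype.ext <| mul_left_cancel (a := gr (j (g * g') i)) ?_
  rw [← hrel, cosetIndex_mul hgr hrel, Subgroup.coe_mul, ← mul_assoc, ← hrel, mul_assoc, hrel,
    mul_assoc]

theorem cosetIndex_injective (hgr : Function.Injective fun i => (gr i : G ⧸ H))
    (hrel : ∀ (g : G) (i : Fin N), g * gr i = gr (j g i) * ((hf g i : G))) (g : G) :
    (j g).Injective := fun a b hab => hgr <| by
  have h := coe_mul_cosetRep hrel g a
  rw [hab, ← coe_mul_cosetRep hrel g b, ← smul_eq_mul, ← smul_eq_mul,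
    ← MulAction.Quotient.smul_coe, ← MulAction.Quotient.smul_coe] at h
  exact smul_left_cancel g h

end CosetRepresentatives

section InducedRepresentation

variable {G : Type*} [Group G] {H : Subgroup G} {N km : ℕ} {gr : Fin N → G}
  {j : G → Fin N → Fin N} {hf : G → Fin N → H}

theorem IndRep_eq_blockMonomial (π : H → Matrix (Fin km) (Fin km) ℂ) (g : G) :
    IndRep N km π j hf g = blockMonomial (j g) fun i => π (hf g i) :=
  rfl

theorem IndRep_mul_sub_mul (hgr : Function.Injective fun i => (gr i : G ⧸ H))
    (hrel : ∀ (g : G) (i : Fin N), g * gr i = gr (j g i) * ((hf g i : G)))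
    (π : H → Matrix (Fin km) (Fin km) ℂ) (g g' : G) :
    IndRep N km π j hf (g * g') - IndRep N km π j hf g * IndRep N km π j hf g' =
      blockMonomial (j g ∘ j g') fun i =>
        π (hf g (j g' i) * hf g' i) - π (hf g (j g' i)) * π (hf g' i) := by
  have hj : j (g * g') = j g ∘ j g' := funext (cosetIndex_mul hgr hrel g g')
  simp only [IndRep_eq_blockMonomial, blockMonomial_mul, hj, cosetFactor_mul hgr hrel,
    blockMonomial_sub]
  rfl

theorem opNorm_IndRep_mul_sub_mul_le (hgr : Function.Injective fun i => (gr i : G ⧸ H))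
    (hrel : ∀ (g : G) (i : Fin N), g * gr i = gr (j g i) * ((hf g i : G)))
    (π : H → Matrix (Fin km) (Fin km) ℂ) (g g' : G)
    (hne : (Finset.univ : Finset (Fin N)).Nonempty) :
    opNorm (IndRep N km π j hf (g * g') - IndRep N km π j hf g * IndRep N km π j hf g') ≤
      Finset.univ.sup' hne fun i : Fin N =>
        opNorm (π (hf g (j g' i)) * π (hf g' i) - π (hf g (j g' i) * hf g' i)) := by
  set defect := fun i : Fin N =>
    opNorm (π (hf g (j g' i)) * π (hf g' i) - π (hf g (j g' i) * hf g' i))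
  have hdefect (i : Fin N) : defect i ≤ Finset.univ.sup' hne defect :=
    Finset.le_sup' defect (Finset.mem_univ i)
  have ⟨i₀, _⟩ := hne
  simp only [opNorm_eq_norm, IndRep_mul_sub_mul hgr hrel]
  refine norm_blockMonomial_le
    ((cosetIndex_injective hgr hrel g).comp (cosetIndex_injective hgr hrel g'))
    ((norm_nonneg _).trans (hdefect i₀)) fun i => ?_
  rw [norm_sub_rev]
  exact hdefect i

end InducedRepresentation

theorem stmt15_general {G : Type*} [Group G] (H : Subgroup G) (N : ℕ) (hN : 0 < N)
    (gr : Fin N → G)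
    (hgr : Function.Bijective fun i => (QuotientGroup.mk (gr i) : G ⧸ H))
    (j : G → Fin N → Fin N) (hf : G → Fin N → H)
    (hrel : ∀ (g : G) (i : Fin N), g * gr i = gr (j g i) * ((hf g i : G)))
    (k : ℕ → ℕ) (π : ∀ m : ℕ, H → Matrix (Fin (k m)) (Fin (k m)) ℂ)
    (hπ : ∀ h₁ h₂ : H,
      Filter.Tendsto (fun m => opNorm (π m (h₁ * h₂) - π m h₁ * π m h₂))
        Filter.atTop (nhds 0)) :
    (∀ g g' : G, Filter.Tendsto (fun m =>
        opNorm (IndRep N (k m) (π m) j hf (g * g') -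
          IndRep N (k m) (π m) j hf g * IndRep N (k m) (π m) j hf g'))
      Filter.atTop (nhds 0)) ∧
    (∀ (g g' : G) (m : ℕ),
      opNorm (IndRep N (k m) (π m) j hf (g * g') -
        IndRep N (k m) (π m) j hf g * IndRep N (k m) (π m) j hf g') ≤
      Finset.univ.sup' ⟨⟨0, hN⟩, Finset.mem_univ _⟩ (fun i : Fin N =>
        opNorm (π m (hf g (j g' i)) * π m (hf g' i) -
          π m (hf g (j g' i) * hf g' i)))) := by
  have hne : (Finset.univ : Finset (Fin N)).Nonempty := ⟨⟨0, hN⟩, Finset.mem_univ _⟩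
  have hbound := fun g g' m => opNorm_IndRep_mul_sub_mul_le hgr.injective hrel (π m) g g' hne
  refine ⟨fun g g' => squeeze_zero (fun _ => norm_nonneg _) (hbound g g') ?_, hbound⟩
  have hlim : Tendsto (fun m => Finset.univ.sup' hne fun i =>
      opNorm (π m (hf g (j g' i)) * π m (hf g' i) - π m (hf g (j g' i) * hf g' i)))
      atTop (nhds (Finset.univ.sup' hne fun _ => 0)) :=
    Tendsto.finset_sup'_nhds_apply hne fun i _ => by
      simpa only [opNorm_eq_norm, norm_sub_rev] using hπ (hf g (j g' i)) (hf g' i)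
  rwa [Finset.sup'_const] at hlim

/-- If `H ≤ G` has finite index `N` (witnessed by coset representatives `gr`) and
`π_n : H → U(k(n))` is an approximate homomorphism, then the induced maps
`Ind π_n : G → U(N·k(n))` form an approximate homomorphism of `G`, and the defect
`‖(Ind π_n)(gg') − (Ind π_n)(g)(Ind π_n)(g')‖` is bounded by the maximum over the
relevant elements `h', h ∈ H` of `‖π_n(h')π_n(h) − π_n(h'h)‖`. -/
theorem stmt15 {G : Type*} [Group G] (H : Subgroup G) (N : ℕ) (hN : 0 < N)
    (gr : Fin N → G)
    (hgr : Function.Bijective fun i => (QuotientGroup.mk (gr i) : G ⧸ H))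
    (j : G → Fin N → Fin N) (hf : G → Fin N → H)
    (hrel : ∀ (g : G) (i : Fin N), g * gr i = gr (j g i) * ((hf g i : G)))
    (k : ℕ → ℕ) (π : ∀ m : ℕ, H → Matrix (Fin (k m)) (Fin (k m)) ℂ)
    (hπu : ∀ (m : ℕ) (h : H), π m h ∈ Matrix.unitaryGroup (Fin (k m)) ℂ)
    (hπ : ∀ h₁ h₂ : H,
      Filter.Tendsto (fun m => opNorm (π m (h₁ * h₂) - π m h₁ * π m h₂))
        Filter.atTop (nhds 0)) :
    (∀ g g' : G, Filter.Tendsto (fun m =>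
        opNorm (IndRep N (k m) (π m) j hf (g * g') -
          IndRep N (k m) (π m) j hf g * IndRep N (k m) (π m) j hf g'))
      Filter.atTop (nhds 0)) ∧
    (∀ (g g' : G) (m : ℕ),
      opNorm (IndRep N (k m) (π m) j hf (g * g') -
        IndRep N (k m) (π m) j hf g * IndRep N (k m) (π m) j hf g') ≤
      Finset.univ.sup' ⟨⟨0, hN⟩, Finset.mem_univ _⟩ (fun i : Fin N =>
        opNorm (π m (hf g (j g' i)) * π m (hf g' i) -
          π m (hf g (j g' i) * hf g' i)))) :=
  stmt15_general H N hN gr hgr j hf hrel k π hπ
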